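/- arXiv:2211.09642 — 5 statements merged into one kernel-verified Lean document; each statement's English description precedes it below -/
import Mathlib

section
/- Let G = (V,E,A) be a signed directed graph with vertices ordered v₁,…,vₙ, and let Θ = (ξ, q) be parameters with every entry of ξ in the open interval (0,1) and q ∈ (0,1). Then there exists a master assignment C̃ : V → S such that σ_j = Z_j / Z_{j−1} ≥ 1/2 for every j ∈ {1,…,n} (all Z_j here are positive, so the ratios are well defined). -/
open Finset

/-- Probability of an edge of sign `s` (`true` = `+`) between group labels
`x`, `y` (`true` = activator `A`, `false` = repressor `R`):
`P⁺_{x,y} = ξ x y`, `P⁻_{x,y} = 1 - ξ x y`. -/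
def pSign (ξ : Bool → Bool → ℝ) (s : Bool) (x y : Bool) : ℝ :=
  if s then ξ x y else 1 - ξ x y

/-- `P(𝒜 | Θ, C)`: product over the edges of the edge-sign probabilities. -/
def likCond {n : ℕ} (ξ : Bool → Bool → ℝ) (E : Finset (Fin n × Fin n))
    (sgn : Fin n × Fin n → Bool) (C : Fin n → Bool) : ℝ :=
  ∏ e ∈ E, pSign ξ (sgn e) (C e.1) (C e.2)

/-- `P(C | j)`: prior probability of the labels of the vertices with 0-based
index `≥ j`; these are the vertices `v_{j+1}, …, v_n` of the paper. -/
def priorFrom {n : ℕ} (q : ℝ) (j : ℕ) (C : Fin n → Bool) : ℝ :=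
  q ^ (univ.filter (fun i : Fin n => j ≤ (i : ℕ) ∧ C i = true)).card *
    (1 - q) ^ (univ.filter (fun i : Fin n => j ≤ (i : ℕ) ∧ C i = false)).card

/-- The assignments agreeing with the master assignment `Ct` on the first `j`
vertices (0-based indices `0, …, j-1`), i.e. `C_j^{[C̃(v₁),…,C̃(v_j)]}`. -/
def agree {n : ℕ} (Ct : Fin n → Bool) (j : ℕ) : Finset (Fin n → Bool) :=
  univ.filter (fun C => ∀ i : Fin n, (i : ℕ) < j → C i = Ct i)

/-- The restricted likelihood `Z_j`. -/
def Z {n : ℕ} (ξ : Bool → Bool → ℝ) (q : ℝ) (E : Finset (Fin n × Fin n))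
    (sgn : Fin n × Fin n → Bool) (Ct : Fin n → Bool) (j : ℕ) : ℝ :=
  ∑ C ∈ agree Ct j, likCond ξ E sgn C * priorFrom q j C

/-- `Z_j^s`: like `Z_j`, with the first `j - 1` vertices assigned by `Ct` and
the vertex `v_j` (0-based index `k = j - 1`) assigned the label `s`. -/
def ZS {n : ℕ} (ξ : Bool → Bool → ℝ) (q : ℝ) (E : Finset (Fin n × Fin n))
    (sgn : Fin n × Fin n → Bool) (Ct : Fin n → Bool) (k : Fin n) (s : Bool) : ℝ :=
  ∑ C ∈ (agree Ct (k : ℕ)).filter (fun C => C k = s),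
    likCond ξ E sgn C * priorFrom q ((k : ℕ) + 1) C

section Lemmas

variable {n : ℕ} {ξ : Bool → Bool → ℝ} {q : ℝ} {E : Finset (Fin n × Fin n)}
  {sgn : Fin n × Fin n → Bool}

lemma pSign_pos (hξ : ∀ x y, ξ x y ∈ Set.Ioo (0 : ℝ) 1) (s x y : Bool) :
    0 < pSign ξ s x y := by
  cases s <;> simp [pSign] <;> [linarith [(hξ x y).2]; exact (hξ x y).1]

lemma likCond_pos (hξ : ∀ x y, ξ x y ∈ Set.Ioo (0 : ℝ) 1) (C : Fin n → Bool) :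
    0 < likCond ξ E sgn C :=
  Finset.prod_pos fun e _ => pSign_pos hξ _ _ _

lemma priorFrom_pos (hq : q ∈ Set.Ioo (0 : ℝ) 1) (j : ℕ) (C : Fin n → Bool) :
    0 < priorFrom q j C :=
  mul_pos (pow_pos hq.1 _) (pow_pos (by linarith [hq.2]) _)

lemma self_mem_agree (Ct : Fin n → Bool) (j : ℕ) : Ct ∈ agree Ct j := by
  simp [agree]

lemma Z_pos (hξ : ∀ x y, ξ x y ∈ Set.Ioo (0 : ℝ) 1) (hq : q ∈ Set.Ioo (0 : ℝ) 1)
    (Ct : Fin n → Bool) (j : ℕ) : 0 < Z ξ q E sgn Ct j :=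
  Finset.sum_pos (fun C _ => mul_pos (likCond_pos hξ C) (priorFrom_pos hq j C))
    ⟨Ct, self_mem_agree Ct j⟩

lemma agree_congr {C1 C2 : Fin n → Bool} (j : ℕ)
    (h : ∀ i : Fin n, (i : ℕ) < j → C1 i = C2 i) : agree C1 j = agree C2 j := by
  unfold agree
  apply Finset.filter_congr
  intro C _
  constructor <;> intro hc i hi
  · rw [hc i hi, h i hi]
  · rw [hc i hi, h i hi]

lemma ZS_congr {C1 C2 : Fin n → Bool} (k : Fin n) (s : Bool)
    (h : ∀ i : Fin n, (i : ℕ) < (k : ℕ) → C1 i = C2 i) :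
    ZS ξ q E sgn C1 k s = ZS ξ q E sgn C2 k s := by
  unfold ZS
  rw [agree_congr (k : ℕ) h]

lemma card_split (k : Fin n) (C : Fin n → Bool) (b : Bool) :
    (univ.filter (fun i : Fin n => (k : ℕ) ≤ (i : ℕ) ∧ C i = b)).card
      = (univ.filter (fun i : Fin n => (k : ℕ) + 1 ≤ (i : ℕ) ∧ C i = b)).card
        + (if C k = b then 1 else 0) := by
  by_cases h : C k = b
  · rw [if_pos h]
    have hset : (univ.filter (fun i : Fin n => (k : ℕ) ≤ (i : ℕ) ∧ C i = b))
        = insert k (univ.filter (fun i : Fin n => (k : ℕ) + 1 ≤ (i : ℕ) ∧ C i = b)) := by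
      ext i
      simp only [mem_filter, mem_univ, true_and, mem_insert]
      constructor
      · rintro ⟨h1, h2⟩
        rcases eq_or_lt_of_le h1 with h3 | h3
        · exact Or.inl (Fin.ext h3.symm)
        · exact Or.inr ⟨h3, h2⟩
      · rintro (rfl | ⟨h1, h2⟩)
        · exact ⟨le_refl _, h⟩
        · exact ⟨by omega, h2⟩
    rw [hset, Finset.card_insert_of_notMem (by simp)]
  · rw [if_neg h, add_zero]
    congr 1
    apply Finset.filter_congr
    intro i _
    constructor
    · rintro ⟨h1, h2⟩
      refine ⟨?_, h2⟩
      rcases eq_or_lt_of_le h1 with h3 | h3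
      · exact absurd (Fin.ext h3.symm ▸ h2) h
      · omega
    · rintro ⟨h1, h2⟩
      exact ⟨by omega, h2⟩

lemma priorFrom_succ (k : Fin n) (C : Fin n → Bool) :
    priorFrom q (k : ℕ) C = (if C k then q else 1 - q) * priorFrom q ((k : ℕ) + 1) C := by
  unfold priorFrom
  rw [card_split k C true, card_split k C false]
  cases hC : C k <;> simp [hC, pow_succ] <;> ring

lemma agree_succ (Ct : Fin n → Bool) (k : Fin n) :
    agree Ct ((k : ℕ) + 1) = (agree Ct (k : ℕ)).filter (fun C => C k = Ct k) := by
  ext C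
  simp only [agree, mem_filter, mem_univ, true_and]
  constructor
  · intro h
    exact ⟨fun i hi => h i (by omega), h k (by omega)⟩
  · rintro ⟨h1, h2⟩ i hi
    rcases Nat.lt_succ_iff_lt_or_eq.1 hi with h3 | h3
    · exact h1 i h3
    · have : i = k := Fin.ext h3
      rw [this]; exact h2

lemma Z_succ (Ct : Fin n → Bool) (k : Fin n) :
    Z ξ q E sgn Ct ((k : ℕ) + 1) = ZS ξ q E sgn Ct k (Ct k) := by
  unfold Z ZS
  rw [agree_succ]

lemma Z_split (Ct : Fin n → Bool) (k : Fin n) :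
    Z ξ q E sgn Ct (k : ℕ)
      = q * ZS ξ q E sgn Ct k true + (1 - q) * ZS ξ q E sgn Ct k false := by
  unfold Z ZS
  rw [← Finset.sum_filter_add_sum_filter_not (agree Ct (k : ℕ)) (fun C => C k = true)]
  congr 1
  · rw [Finset.mul_sum]
    apply Finset.sum_congr rfl
    intro C hC
    have h2 : C k = true := (Finset.mem_filter.1 hC).2
    rw [priorFrom_succ k C, h2]
    simp; ring
  · rw [Finset.mul_sum]
    have : (agree Ct (k : ℕ)).filter (fun C => ¬ C k = true)
        = (agree Ct (k : ℕ)).filter (fun C => C k = false) := by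
      apply Finset.filter_congr; intro C _; simp
    rw [this]
    apply Finset.sum_congr rfl
    intro C hC
    have h2 : C k = false := (Finset.mem_filter.1 hC).2
    rw [priorFrom_succ k C, h2]
    simp; ring

end Lemmas

open scoped Classical in
noncomputable def bestCt {n : ℕ} (ξ : Bool → Bool → ℝ) (q : ℝ)
    (E : Finset (Fin n × Fin n)) (sgn : Fin n × Fin n → Bool) : ℕ → Bool
  | k =>
    if h : k < n then
      if ZS ξ q E sgn (fun i : Fin n => if h2 : (i : ℕ) < k then bestCt ξ q E sgn i else false)
            ⟨k, h⟩ false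
          ≤ ZS ξ q E sgn (fun i : Fin n => if h2 : (i : ℕ) < k then bestCt ξ q E sgn i else false)
            ⟨k, h⟩ true
      then true else false
    else false
  termination_by k => k
  decreasing_by all_goals exact h2


/-- There exists a master assignment `C̃` such that every ratio
`σ_j = Z_j / Z_{j-1}` is at least `1/2` (all the `Z_j` being positive). -/
theorem stmt_2 (n : ℕ) (E : Finset (Fin n × Fin n)) (sgn : Fin n × Fin n → Bool)
    (ξ : Bool → Bool → ℝ) (q : ℝ)
    (hξ : ∀ x y, ξ x y ∈ Set.Ioo (0 : ℝ) 1) (hq : q ∈ Set.Ioo (0 : ℝ) 1) :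
    ∃ Ct : Fin n → Bool,
      (∀ j ≤ n, 0 < Z ξ q E sgn Ct j) ∧
      ∀ j, 1 ≤ j → j ≤ n →
        Z ξ q E sgn Ct j / Z ξ q E sgn Ct (j - 1) ≥ 1 / 2 := by
  classical
  set Ct : Fin n → Bool := fun i => bestCt ξ q E sgn (i : ℕ) with hCt
  refine ⟨Ct, fun j _ => Z_pos hξ hq Ct j, ?_⟩
  intro j h1 h2
  set k : Fin n := ⟨j - 1, by omega⟩ with hk
  have hj : j = (k : ℕ) + 1 := by simp [hk]; omega
  -- value of Ct at k maximizes ZS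
  have hmax : ZS ξ q E sgn Ct k true ≤ ZS ξ q E sgn Ct k (Ct k)
      ∧ ZS ξ q E sgn Ct k false ≤ ZS ξ q E sgn Ct k (Ct k) := by
    have hagree : ∀ i : Fin n, (i : ℕ) < (k : ℕ) →
        (fun i : Fin n => if h2 : (i : ℕ) < (k : ℕ) then bestCt ξ q E sgn (i : ℕ) else false) i
          = Ct i := by
      intro i hi
      simp [hi, hCt]
    have hC1 := ZS_congr (ξ := ξ) (q := q) (E := E) (sgn := sgn) k true hagree
    have hC2 := ZS_congr (ξ := ξ) (q := q) (E := E) (sgn := sgn) k false hagree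
    have hkdef : Ct k = bestCt ξ q E sgn (k : ℕ) := rfl
    rw [bestCt] at hkdef
    rw [dif_pos k.isLt] at hkdef
    have hfin : (⟨(k : ℕ), k.isLt⟩ : Fin n) = k := by ext; rfl
    rw [hfin] at hkdef
    rw [hC1, hC2] at hkdef
    by_cases hle : ZS ξ q E sgn Ct k false ≤ ZS ξ q E sgn Ct k true
    · rw [if_pos hle] at hkdef
      rw [hkdef]
      exact ⟨le_refl _, hle⟩
    · rw [if_neg hle] at hkdef
      rw [hkdef]
      exact ⟨le_of_not_ge hle, le_refl _⟩
  have hZj : Z ξ q E sgn Ct j = ZS ξ q E sgn Ct k (Ct k) := by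
    rw [hj, Z_succ]
  have hZjm : Z ξ q E sgn Ct (j - 1) = q * ZS ξ q E sgn Ct k true
      + (1 - q) * ZS ξ q E sgn Ct k false := by
    have : j - 1 = (k : ℕ) := by simp [hk]
    rw [this, Z_split]
  have hle : Z ξ q E sgn Ct (j - 1) ≤ Z ξ q E sgn Ct j := by
    rw [hZj, hZjm]
    nlinarith [hmax.1, hmax.2, hq.1, hq.2]
  have hpos : 0 < Z ξ q E sgn Ct (j - 1) := Z_pos hξ hq Ct (j - 1)
  rw [ge_iff_le]
  calc (1:ℝ)/2 ≤ 1 := by norm_num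
    _ ≤ Z ξ q E sgn Ct j / Z ξ q E sgn Ct (j - 1) := (one_le_div hpos).2 hle
end

section
/- Source-consistent ratio lemma: let Θ = (ξ, q) satisfy ξ_{AA} = ξ_{AR} = ξ_{A*} and ξ_{RA} = ξ_{RR} = ξ_{R*}, with ξ_{A*}, 1−ξ_{A*} > 0. Fix a master assignment C̃ and j ∈ {1,…,n}, and set α_j = (ξ_{R*}/ξ_{A*})^{d⁺_out(v_j)} · ((1−ξ_{R*})/(1−ξ_{A*}))^{d⁻_out(v_j)}. Then Z_j^R = α_j · Z_j^A. -/
open Finset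

/-- The number of outgoing edges of `v` (including self-loops) with sign `s`. -/
def doutP {n : ℕ} (E : Finset (Fin n × Fin n)) (sgn : Fin n × Fin n → Bool)
    (v : Fin n) (s : Bool) : ℕ :=
  (E.filter (fun e => e.1 = v ∧ sgn e = s)).card

/-- Source-consistent ratio lemma: `Z_j^R = α_j ⬝ Z_j^A`, where `k : Fin n` is
the 0-based index of the vertex `v_j`. -/
theorem stmt_11 (n : ℕ) (E : Finset (Fin n × Fin n)) (sgn : Fin n × Fin n → Bool)
    (ξ : Bool → Bool → ℝ) (q : ℝ) (ξstar : Bool → ℝ)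
    (hsc : ∀ x y, ξ x y = ξstar x)
    (hA0 : 0 < ξstar true) (hA1 : 0 < 1 - ξstar true)
    (Ct : Fin n → Bool) (k : Fin n)
    (α : ℝ)
    (hα : α = (ξstar false / ξstar true) ^ doutP E sgn k true *
      ((1 - ξstar false) / (1 - ξstar true)) ^ doutP E sgn k false) :
    ZS ξ q E sgn Ct k false = α * ZS ξ q E sgn Ct k true := by
  have hpos1 : ξstar true ≠ 0 := ne_of_gt hA0
  have hpos2 : (1 : ℝ) - ξstar true ≠ 0 := ne_of_gt hA1
  -- likelihood decomposition
  have hlik : ∀ C : Fin n → Bool,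
      likCond ξ E sgn C =
        ξstar (C k) ^ doutP E sgn k true * (1 - ξstar (C k)) ^ doutP E sgn k false *
          ∏ e ∈ E.filter (fun e => ¬ e.1 = k),
            (if sgn e then ξstar (C e.1) else 1 - ξstar (C e.1)) := by
    intro C
    have hps : ∀ e : Fin n × Fin n, pSign ξ (sgn e) (C e.1) (C e.2)
        = if sgn e then ξstar (C e.1) else 1 - ξstar (C e.1) := by
      intro e; simp [pSign, hsc]
    unfold likCond
    rw [← Finset.prod_filter_mul_prod_filter_not E (fun e => e.1 = k)]
    congr 1
    · rw [← Finset.prod_filter_mul_prod_filter_not (E.filter (fun e => e.1 = k))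
        (fun e => sgn e = true)]
      congr 1
      · rw [Finset.filter_filter]
        rw [Finset.prod_congr rfl (fun e he => ?_), Finset.prod_const]
        · rfl
        · simp only [Finset.mem_filter] at he
          rw [hps e, he.2.1, if_pos he.2.2]
      · rw [Finset.filter_filter]
        have hb : ∀ e : Fin n × Fin n, (e.1 = k ∧ ¬ sgn e = true) ↔ (e.1 = k ∧ sgn e = false) := by
          intro e; simp
        rw [Finset.filter_congr (fun e _ => hb e)]
        rw [Finset.prod_congr rfl (fun e he => ?_), Finset.prod_const]
        · rfl
        · simp only [Finset.mem_filter] at he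
          rw [hps e, he.2.1, if_neg (by simp [he.2.2])]
    · exact Finset.prod_congr rfl (fun e _ => hps e)
  -- prior invariance under update at k
  have hprior : ∀ (C : Fin n → Bool) (b : Bool),
      priorFrom q ((k : ℕ) + 1) (Function.update C k b) = priorFrom q ((k : ℕ) + 1) C := by
    intro C b
    have hset : ∀ t : Bool,
        (univ.filter (fun i : Fin n => (k : ℕ) + 1 ≤ (i : ℕ) ∧ Function.update C k b i = t)) =
          (univ.filter (fun i : Fin n => (k : ℕ) + 1 ≤ (i : ℕ) ∧ C i = t)) := by
      intro t
      apply Finset.filter_congr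
      intro i _
      constructor <;> rintro ⟨h1, h2⟩ <;> refine ⟨h1, ?_⟩
      · rwa [Function.update_of_ne (fun h => by subst h; omega)] at h2
      · rwa [Function.update_of_ne (fun h => by subst h; omega)]
    unfold priorFrom
    rw [hset true, hset false]
  -- remainder product invariance under update at k
  have hrem : ∀ (C : Fin n → Bool) (b : Bool),
      (∏ e ∈ E.filter (fun e => ¬ e.1 = k),
          (if sgn e then ξstar (Function.update C k b e.1) else 1 - ξstar (Function.update C k b e.1)))
        = ∏ e ∈ E.filter (fun e => ¬ e.1 = k),
            (if sgn e then ξstar (C e.1) else 1 - ξstar (C e.1)) := by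
    intro C b
    apply Finset.prod_congr rfl
    intro e he
    simp only [Finset.mem_filter] at he
    rw [Function.update_of_ne he.2]
  unfold ZS
  rw [Finset.mul_sum]
  apply Finset.sum_nbij' (i := fun C => Function.update C k true)
    (j := fun C => Function.update C k false)
  · intro C hC
    simp only [Finset.mem_filter, agree, Finset.mem_univ, true_and] at hC ⊢
    refine ⟨fun i hi => ?_, by simp⟩
    rw [Function.update_of_ne (fun h => by subst h; omega)]
    exact hC.1 i hi
  · intro C hC
    simp only [Finset.mem_filter, agree, Finset.mem_univ, true_and] at hC ⊢
    refine ⟨fun i hi => ?_, by simp⟩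
    rw [Function.update_of_ne (fun h => by subst h; omega)]
    exact hC.1 i hi
  · intro C hC
    simp only [Finset.mem_filter, agree, Finset.mem_univ, true_and] at hC
    funext i
    by_cases h : i = k
    · subst h; simp [hC.2]
    · simp [Function.update_of_ne h]
  · intro C hC
    simp only [Finset.mem_filter, agree, Finset.mem_univ, true_and] at hC
    funext i
    by_cases h : i = k
    · subst h; simp [hC.2]
    · simp [Function.update_of_ne h]
  · intro C hC
    simp only [Finset.mem_filter, agree, Finset.mem_univ, true_and] at hC
    rw [hlik, hlik, hprior]
    have hk : Function.update C k true k = true := by simp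
    rw [hk, hC.2, hrem]
    rw [hα, div_pow, div_pow]
    field_simp
end

section
/- Source-consistent likelihood-ratio formula: under the hypotheses of the source-consistent model (ξ_{AA} = ξ_{AR} = ξ_{A*}, ξ_{RA} = ξ_{RR} = ξ_{R*}, all entries of ξ in (0,1), q ∈ (0,1)), for every j ∈ {1,…,n} and every master assignment C̃ with Z_{j−1} > 0: σ_j^A = 1/(q + α_j(1−q)), σ_j^R = α_j/(q + α_j(1−q)), and hence σ_j^* := max{σ_j^A, σ_j^R} = max{ 1/(q + α_j(1−q)), α_j/(q + α_j(1−q)) }, where α_j = (ξ_{R*}/ξ_{A*})^{d⁺_out(v_j)} · ((1−ξ_{R*})/(1−ξ_{A*}))^{d⁻_out(v_j)}. -/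
open Finset

lemma priorFrom_eq_prod {n : ℕ} (q : ℝ) (j : ℕ) (C : Fin n → Bool) :
    priorFrom q j C = ∏ i ∈ univ.filter (fun i : Fin n => j ≤ (i : ℕ)),
      (if C i then q else 1 - q) := by
  rw [Finset.prod_ite, Finset.prod_const, Finset.prod_const,
      Finset.filter_filter, Finset.filter_filter, priorFrom]
  congr 2 <;> · congr 1; ext i; simp [Bool.not_eq_true]

lemma prior_split {n : ℕ} (q : ℝ) (k : Fin n) (C : Fin n → Bool) :
    priorFrom q (k : ℕ) C = (if C k then q else 1 - q) * priorFrom q ((k : ℕ) + 1) C := by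
  rw [priorFrom_eq_prod, priorFrom_eq_prod]
  have hset : (univ.filter (fun i : Fin n => (k : ℕ) ≤ (i : ℕ))) =
      insert k (univ.filter fun i : Fin n => (k : ℕ) + 1 ≤ (i : ℕ)) := by
    ext i; simp [Fin.ext_iff, eq_comm]; omega
  rw [hset, Finset.prod_insert (by simp)]

lemma pSign_sc {ξ : Bool → Bool → ℝ} {ξstar : Bool → ℝ} (hsc : ∀ x y, ξ x y = ξstar x)
    (s x y : Bool) : pSign ξ s x y = if s then ξstar x else 1 - ξstar x := by
  simp [pSign, hsc]

lemma likCond_split {n : ℕ} {ξ : Bool → Bool → ℝ} {ξstar : Bool → ℝ}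
    (hsc : ∀ x y, ξ x y = ξstar x)
    (E : Finset (Fin n × Fin n)) (sgn : Fin n × Fin n → Bool)
    (k : Fin n) (C : Fin n → Bool) :
    likCond ξ E sgn C =
      ξstar (C k) ^ doutP E sgn k true * (1 - ξstar (C k)) ^ doutP E sgn k false *
        likCond ξ (E.filter (fun e => e.1 ≠ k)) sgn C := by
  unfold likCond
  rw [← Finset.prod_filter_mul_prod_filter_not E (fun e => e.1 = k)]
  congr 1
  rw [← Finset.prod_filter_mul_prod_filter_not (E.filter (fun e => e.1 = k))
      (fun e => sgn e = true)]
  congr 1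
  · rw [Finset.prod_congr rfl (g := fun _ => ξstar (C k)) (fun e he => by
      simp only [Finset.mem_filter] at he
      rw [pSign_sc hsc, if_pos he.2, he.1.2]), Finset.prod_const]
    congr 1
    rw [doutP, Finset.filter_filter]
  · rw [Finset.prod_congr rfl (g := fun _ => 1 - ξstar (C k)) (fun e he => by
      simp only [Finset.mem_filter, Bool.not_eq_true] at he
      rw [pSign_sc hsc, if_neg (by simp [he.2]), he.1.2]), Finset.prod_const]
    congr 1
    rw [doutP, Finset.filter_filter]
    congr 1
    ext e
    simp [Bool.not_eq_true]

lemma likCond_update {n : ℕ} {ξ : Bool → Bool → ℝ} {ξstar : Bool → ℝ}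
    (hsc : ∀ x y, ξ x y = ξstar x)
    (E : Finset (Fin n × Fin n)) (sgn : Fin n × Fin n → Bool)
    (k : Fin n) (C : Fin n → Bool) (b : Bool) :
    likCond ξ (E.filter (fun e => e.1 ≠ k)) sgn (Function.update C k b) =
      likCond ξ (E.filter (fun e => e.1 ≠ k)) sgn C := by
  unfold likCond
  refine Finset.prod_congr rfl (fun e he => ?_)
  simp only [Finset.mem_filter] at he
  rw [pSign_sc hsc, pSign_sc hsc, Function.update_of_ne he.2]

lemma priorFrom_update {n : ℕ} (q : ℝ) (k : Fin n) (C : Fin n → Bool) (b : Bool) :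
    priorFrom q ((k : ℕ) + 1) (Function.update C k b) = priorFrom q ((k : ℕ) + 1) C := by
  unfold priorFrom
  have h : ∀ c : Bool,
      (univ.filter fun i : Fin n => (k : ℕ) + 1 ≤ (i : ℕ) ∧ Function.update C k b i = c) =
      (univ.filter fun i : Fin n => (k : ℕ) + 1 ≤ (i : ℕ) ∧ C i = c) := by
    intro c
    apply Finset.filter_congr
    intro i _
    by_cases h : (k : ℕ) + 1 ≤ (i : ℕ)
    · have hik : i ≠ k := by intro he; subst he; omega
      rw [Function.update_of_ne hik]
    · simp [h]
  rw [h true, h false]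

lemma update_mem_agree {n : ℕ} (Ct : Fin n → Bool) (k : Fin n) (C : Fin n → Bool) (b : Bool)
    (hC : C ∈ agree Ct (k : ℕ)) :
    Function.update C k b ∈ (agree Ct (k : ℕ)).filter (fun C => C k = b) := by
  simp only [agree, Finset.mem_filter, Finset.mem_univ, true_and] at hC ⊢
  refine ⟨fun i hi => ?_, Function.update_self k b C⟩
  rw [Function.update_of_ne (by intro he; subst he; omega)]
  exact hC i hi

/-- Source-consistent likelihood-ratio formula:
`σ_j^A = 1/(q + α_j(1-q))`, `σ_j^R = α_j/(q + α_j(1-q))`, and hence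
`σ_j^* = max{σ_j^A, σ_j^R}` equals the maximum of the two expressions.
Here `k : Fin n` is the 0-based index of the vertex `v_j`, so
`σ_j^s = ZS ... k s / Z ... (k : ℕ)`. -/
theorem stmt_12 (n : ℕ) (E : Finset (Fin n × Fin n)) (sgn : Fin n × Fin n → Bool)
    (ξ : Bool → Bool → ℝ) (q : ℝ) (ξstar : Bool → ℝ)
    (hsc : ∀ x y, ξ x y = ξstar x)
    (hξ : ∀ x y, ξ x y ∈ Set.Ioo (0 : ℝ) 1) (hq : q ∈ Set.Ioo (0 : ℝ) 1)
    (Ct : Fin n → Bool) (k : Fin n)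
    (hZ : 0 < Z ξ q E sgn Ct (k : ℕ))
    (α : ℝ)
    (hα : α = (ξstar false / ξstar true) ^ doutP E sgn k true *
      ((1 - ξstar false) / (1 - ξstar true)) ^ doutP E sgn k false) :
    ZS ξ q E sgn Ct k true / Z ξ q E sgn Ct (k : ℕ) = 1 / (q + α * (1 - q)) ∧
    ZS ξ q E sgn Ct k false / Z ξ q E sgn Ct (k : ℕ) = α / (q + α * (1 - q)) ∧
    max (ZS ξ q E sgn Ct k true / Z ξ q E sgn Ct (k : ℕ))
        (ZS ξ q E sgn Ct k false / Z ξ q E sgn Ct (k : ℕ)) =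
      max (1 / (q + α * (1 - q))) (α / (q + α * (1 - q))) := by
  have hξT := hξ true true; have hξF := hξ false false
  rw [hsc] at hξT hξF
  set d₁ := doutP E sgn k true with hd₁
  set d₂ := doutP E sgn k false with hd₂
  set f : (Fin n → Bool) → ℝ := fun C =>
    likCond ξ (E.filter (fun e => e.1 ≠ k)) sgn C * priorFrom q ((k : ℕ) + 1) C with hf
  set β : Bool → ℝ := fun s => ξstar s ^ d₁ * (1 - ξstar s) ^ d₂ with hβ
  have hterm : ∀ C : Fin n → Bool,
      likCond ξ E sgn C * priorFrom q ((k : ℕ) + 1) C = β (C k) * f C := by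
    intro C
    rw [likCond_split hsc E sgn k C, hf, hβ]
    ring
  have hZS : ∀ s : Bool, ZS ξ q E sgn Ct k s =
      β s * ∑ C ∈ (agree Ct (k : ℕ)).filter (fun C => C k = s), f C := by
    intro s
    rw [ZS, Finset.mul_sum]
    refine Finset.sum_congr rfl (fun C hC => ?_)
    have hCk : C k = s := (Finset.mem_filter.mp hC).2
    rw [hterm C, hCk]
  have hflip : ∑ C ∈ (agree Ct (k : ℕ)).filter (fun C => C k = false), f C
      = ∑ C ∈ (agree Ct (k : ℕ)).filter (fun C => C k = true), f C := by
    refine Finset.sum_nbij' (i := fun C => Function.update C k true)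
      (j := fun C => Function.update C k false) ?_ ?_ ?_ ?_ ?_
    · intro C hC
      exact update_mem_agree Ct k C true (Finset.filter_subset _ _ hC)
    · intro C hC
      exact update_mem_agree Ct k C false (Finset.filter_subset _ _ hC)
    · intro C hC
      have hCk : C k = false := (Finset.mem_filter.mp hC).2
      show Function.update (Function.update C k true) k false = C
      rw [Function.update_idem, ← hCk, Function.update_eq_self]
    · intro C hC
      have hCk : C k = true := (Finset.mem_filter.mp hC).2
      show Function.update (Function.update C k false) k true = C
      rw [Function.update_idem, ← hCk, Function.update_eq_self]
    · intro C hC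
      rw [hf]
      simp only
      rw [likCond_update hsc, priorFrom_update]
  have hTne0 : (0:ℝ) < ξstar true := hξT.1
  have hT1 : ξstar true < 1 := hξT.2
  have hZSfalse : ZS ξ q E sgn Ct k false = α * ZS ξ q E sgn Ct k true := by
    rw [hZS, hZS, hflip, hα, hβ]
    simp only
    rw [div_pow, div_pow]
    have h1 : (ξstar true : ℝ) ^ d₁ ≠ 0 := pow_ne_zero _ (ne_of_gt hTne0)
    have h2 : ((1 : ℝ) - ξstar true) ^ d₂ ≠ 0 := pow_ne_zero _ (ne_of_gt (by linarith))
    field_simp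
  have hZsplit : Z ξ q E sgn Ct (k : ℕ) =
      q * ZS ξ q E sgn Ct k true + (1 - q) * ZS ξ q E sgn Ct k false := by
    rw [Z, Finset.sum_congr rfl (fun C (_ : C ∈ agree Ct (k : ℕ)) => by
      rw [prior_split q k C] : ∀ C ∈ agree Ct (k : ℕ), _ = _),
      ← Finset.sum_filter_add_sum_filter_not (agree Ct (k : ℕ)) (fun C => C k = true)]
    congr 1
    · rw [ZS, Finset.mul_sum]
      refine Finset.sum_congr rfl (fun C hC => ?_)
      have hCk : C k = true := (Finset.mem_filter.mp hC).2
      rw [hCk]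
      simp
      ring
    · rw [ZS, Finset.mul_sum,
        show (agree Ct (k : ℕ)).filter (fun C => ¬(C k = true)) =
          (agree Ct (k : ℕ)).filter (fun C => C k = false) from by
            ext C; simp [Bool.not_eq_true]]
      refine Finset.sum_congr rfl (fun C hC => ?_)
      have hCk : C k = false := (Finset.mem_filter.mp hC).2
      rw [hCk]
      simp
      ring
  have hα0 : 0 < α := by
    rw [hα]
    have := hξF.1; have := hξF.2
    apply mul_pos
    · exact pow_pos (div_pos hξF.1 hTne0) _
    · exact pow_pos (div_pos (by linarith) (by linarith)) _
  have hD : 0 < q + α * (1 - q) :=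
    add_pos hq.1 (mul_pos hα0 (sub_pos.mpr hq.2))
  have hZeq : Z ξ q E sgn Ct (k : ℕ) = ZS ξ q E sgn Ct k true * (q + α * (1 - q)) := by
    rw [hZsplit, hZSfalse]; ring
  have hTne : ZS ξ q E sgn Ct k true ≠ 0 := by
    intro h
    rw [hZeq, h, zero_mul] at hZ
    exact lt_irrefl 0 hZ
  have h1 : ZS ξ q E sgn Ct k true / Z ξ q E sgn Ct (k : ℕ) = 1 / (q + α * (1 - q)) := by
    rw [hZeq]
    field_simp
  have h2 : ZS ξ q E sgn Ct k false / Z ξ q E sgn Ct (k : ℕ) = α / (q + α * (1 - q)) := by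
    rw [hZSfalse, hZeq]
    field_simp
  exact ⟨h1, h2, by rw [h1, h2]⟩
end

section
/- Target-consistent likelihood-ratio formula: under the hypotheses of the target-consistent model (ξ_{AA} = ξ_{RA} = ξ_{*A}, ξ_{AR} = ξ_{RR} = ξ_{*R}, all entries of ξ in (0,1), q ∈ (0,1)), for every j ∈ {1,…,n} and every master assignment C̃ with Z_{j−1} > 0: σ_j^A = 1/(q + α_j(1−q)) and σ_j^R = α_j/(q + α_j(1−q)), where α_j = (ξ_{*R}/ξ_{*A})^{d⁺_in(v_j)} · ((1−ξ_{*R})/(1−ξ_{*A}))^{d⁻_in(v_j)}; equivalently Z_j^R = α_j · Z_j^A. -/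
open Finset

/-- The number of incoming edges of `v` (including self-loops) with sign `s`. -/
def dinP {n : ℕ} (E : Finset (Fin n × Fin n)) (sgn : Fin n × Fin n → Bool)
    (v : Fin n) (s : Bool) : ℕ :=
  (E.filter (fun e => e.2 = v ∧ sgn e = s)).card

/-- Target-consistent likelihood-ratio formula:
`σ_j^A = 1/(q + α_j(1-q))`, `σ_j^R = α_j/(q + α_j(1-q))` with `α_j` built from
the signed in-degrees of `v_j`; equivalently `Z_j^R = α_j ⬝ Z_j^A`.
Here `k : Fin n` is the 0-based index of the vertex `v_j`. -/
theorem stmt_13 (n : ℕ) (E : Finset (Fin n × Fin n)) (sgn : Fin n × Fin n → Bool)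
    (ξ : Bool → Bool → ℝ) (q : ℝ) (ξstar : Bool → ℝ)
    (htc : ∀ x y, ξ x y = ξstar y)
    (hξ : ∀ x y, ξ x y ∈ Set.Ioo (0 : ℝ) 1) (hq : q ∈ Set.Ioo (0 : ℝ) 1)
    (Ct : Fin n → Bool) (k : Fin n)
    (hZ : 0 < Z ξ q E sgn Ct (k : ℕ))
    (α : ℝ)
    (hα : α = (ξstar false / ξstar true) ^ dinP E sgn k true *
      ((1 - ξstar false) / (1 - ξstar true)) ^ dinP E sgn k false) :
    ZS ξ q E sgn Ct k true / Z ξ q E sgn Ct (k : ℕ) = 1 / (q + α * (1 - q)) ∧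
    ZS ξ q E sgn Ct k false / Z ξ q E sgn Ct (k : ℕ) = α / (q + α * (1 - q)) ∧
    ZS ξ q E sgn Ct k false = α * ZS ξ q E sgn Ct k true := by
  obtain ⟨hq0, hq1⟩ := hq
  have hξt := hξ true true
  rw [htc] at hξt
  have hξf := hξ true false
  rw [htc] at hξf
  obtain ⟨hξt0, hξt1⟩ := hξt
  obtain ⟨hξf0, hξf1⟩ := hξf
  have hξt1' : (0:ℝ) < 1 - ξstar true := by linarith
  have hξf1' : (0:ℝ) < 1 - ξstar false := by linarith
  set dT := dinP E sgn k true with hdT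
  set dF := dinP E sgn k false with hdF
  set βt : ℝ := ξstar true ^ dT * (1 - ξstar true) ^ dF with hβt
  set βf : ℝ := ξstar false ^ dT * (1 - ξstar false) ^ dF with hβf
  have hξtne : ξstar true ≠ 0 := ne_of_gt hξt0
  have h1ξtne : (1:ℝ) - ξstar true ≠ 0 := ne_of_gt hξt1'
  have hαβ : βf = α * βt := by
    rw [hβf, hβt, hα, div_pow, div_pow]
    field_simp
  have hαpos : 0 < α := by
    rw [hα]
    exact mul_pos (pow_pos (div_pos hξf0 hξt0) _) (pow_pos (div_pos hξf1' hξt1') _)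
  have hD : 0 < q + α * (1 - q) := by nlinarith
  -- likelihood decomposition
  have hlik : ∀ C : Fin n → Bool, likCond ξ E sgn C =
      (ξstar (C k) ^ dT * (1 - ξstar (C k)) ^ dF) *
      ∏ e ∈ E.filter (fun e => ¬ e.2 = k),
        (if sgn e then ξstar (C e.2) else 1 - ξstar (C e.2)) := by
    intro C
    have hps : ∀ e : Fin n × Fin n, pSign ξ (sgn e) (C e.1) (C e.2)
        = if sgn e then ξstar (C e.2) else 1 - ξstar (C e.2) := by
      intro e; unfold pSign; rw [htc]
    unfold likCond
    rw [← Finset.prod_filter_mul_prod_filter_not E (fun e => e.2 = k)]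
    congr 1
    · calc ∏ e ∈ E.filter (fun e => e.2 = k), pSign ξ (sgn e) (C e.1) (C e.2)
          = ∏ e ∈ E.filter (fun e => e.2 = k),
              (if sgn e then ξstar (C k) else 1 - ξstar (C k)) := by
            refine Finset.prod_congr rfl fun e he => ?_
            rw [hps e, (Finset.mem_filter.mp he).2]
        _ = ξstar (C k) ^ dT * (1 - ξstar (C k)) ^ dF := by
            rw [Finset.prod_ite, Finset.prod_const, Finset.prod_const,
              Finset.filter_filter, Finset.filter_filter]
            have h2 : E.filter (fun e => e.2 = k ∧ ¬ sgn e = true)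
                = E.filter (fun e => e.2 = k ∧ sgn e = false) := by
              apply Finset.filter_congr
              intro e _
              simp
            rw [h2]
            rfl
    · exact Finset.prod_congr rfl fun e _ => hps e
  -- invariance of the off-k factors under updating at k
  have hRupd : ∀ (C : Fin n → Bool) (b : Bool),
      (∏ e ∈ E.filter (fun e => ¬ e.2 = k),
        (if sgn e then ξstar ((Function.update C k b) e.2)
          else 1 - ξstar ((Function.update C k b) e.2)))
      = ∏ e ∈ E.filter (fun e => ¬ e.2 = k),
        (if sgn e then ξstar (C e.2) else 1 - ξstar (C e.2)) := by
    intro C b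
    refine Finset.prod_congr rfl fun e he => ?_
    rw [Function.update_of_ne (Finset.mem_filter.mp he).2]
  have hPupd : ∀ (C : Fin n → Bool) (b : Bool),
      priorFrom q ((k:ℕ)+1) (Function.update C k b) = priorFrom q ((k:ℕ)+1) C := by
    intro C b
    unfold priorFrom
    have h : ∀ v : Bool,
        (univ.filter (fun i : Fin n => (k:ℕ)+1 ≤ (i:ℕ) ∧ Function.update C k b i = v))
        = univ.filter (fun i : Fin n => (k:ℕ)+1 ≤ (i:ℕ) ∧ C i = v) := by
      intro v
      apply Finset.filter_congr
      intro i _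
      by_cases hi : i = k
      · subst hi; simp
      · rw [Function.update_of_ne hi]
    rw [h true, h false]
  have hmem : ∀ (C : Fin n → Bool) (b : Bool), C ∈ agree Ct (k:ℕ) →
      Function.update C k b ∈ agree Ct (k:ℕ) := by
    intro C b hC
    simp only [agree, Finset.mem_filter, Finset.mem_univ, true_and] at *
    intro i hik
    have hi : i ≠ k := by
      intro h
      subst h
      omega
    rw [Function.update_of_ne hi]
    exact hC i hik
  -- the ratio identity Z^R = α Z^A
  have hratio : ZS ξ q E sgn Ct k false = α * ZS ξ q E sgn Ct k true := by
    unfold ZS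
    rw [Finset.mul_sum]
    refine Finset.sum_bij' (fun C _ => Function.update C k true)
      (fun C _ => Function.update C k false) ?_ ?_ ?_ ?_ ?_
    · intro C hC
      rw [Finset.mem_filter] at hC ⊢
      refine ⟨hmem C true hC.1, ?_⟩
      simp
    · intro C hC
      rw [Finset.mem_filter] at hC ⊢
      refine ⟨hmem C false hC.1, ?_⟩
      simp
    · intro C hC
      have hCk : C k = false := (Finset.mem_filter.mp hC).2
      funext i
      by_cases hi : i = k
      · subst hi; simp [hCk]
      · simp [Function.update_of_ne hi]
    · intro C hC
      have hCk : C k = true := (Finset.mem_filter.mp hC).2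
      funext i
      by_cases hi : i = k
      · subst hi; simp [hCk]
      · simp [Function.update_of_ne hi]
    · intro C hC
      have hCk : C k = false := (Finset.mem_filter.mp hC).2
      rw [hlik C, hlik (Function.update C k true), hCk, Function.update_self,
        hRupd C true, hPupd C true, ← hβf, ← hβt, hαβ]
      ring
  -- prior splitting
  have hcard : ∀ (C : Fin n → Bool) (b : Bool),
      (univ.filter (fun i : Fin n => (k:ℕ) ≤ (i:ℕ) ∧ C i = b)).card =
      (univ.filter (fun i : Fin n => (k:ℕ)+1 ≤ (i:ℕ) ∧ C i = b)).card
        + (if C k = b then 1 else 0) := by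
    intro C b
    by_cases h : C k = b
    · rw [if_pos h]
      have hset : (univ.filter (fun i : Fin n => (k:ℕ) ≤ (i:ℕ) ∧ C i = b))
          = insert k (univ.filter (fun i : Fin n => (k:ℕ)+1 ≤ (i:ℕ) ∧ C i = b)) := by
        ext i
        simp only [Finset.mem_filter, Finset.mem_univ, true_and, Finset.mem_insert]
        constructor
        · rintro ⟨h1, h2⟩
          rcases Nat.eq_or_lt_of_le h1 with h3 | h3
          · exact Or.inl (Fin.ext h3.symm)
          · exact Or.inr ⟨h3, h2⟩
        · rintro (rfl | ⟨h1, h2⟩)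
          · exact ⟨le_refl _, h⟩
          · exact ⟨Nat.le_of_succ_le h1, h2⟩
      rw [hset, Finset.card_insert_of_notMem (by simp)]
    · rw [if_neg h, add_zero]
      congr 1
      apply Finset.filter_congr
      intro i _
      constructor
      · rintro ⟨h1, h2⟩
        rcases Nat.eq_or_lt_of_le h1 with h3 | h3
        · have hik : i = k := Fin.ext h3.symm
          subst hik
          exact absurd h2 h
        · exact ⟨h3, h2⟩
      · rintro ⟨h1, h2⟩
        exact ⟨Nat.le_of_succ_le h1, h2⟩
  have hprior : ∀ C : Fin n → Bool, priorFrom q (k:ℕ) C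
      = (if C k = true then q else 1 - q) * priorFrom q ((k:ℕ)+1) C := by
    intro C
    unfold priorFrom
    rw [hcard C true, hcard C false]
    cases hCk : C k <;> simp [hCk, pow_succ] <;> ring
  have hZsplit : Z ξ q E sgn Ct (k:ℕ)
      = q * ZS ξ q E sgn Ct k true + (1 - q) * ZS ξ q E sgn Ct k false := by
    unfold Z ZS
    rw [← Finset.sum_filter_add_sum_filter_not (agree Ct (k:ℕ)) (fun C => C k = true)
      (fun C => likCond ξ E sgn C * priorFrom q (k:ℕ) C), Finset.mul_sum, Finset.mul_sum]
    congr 1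
    · refine Finset.sum_congr rfl fun C hC => ?_
      have hCk := (Finset.mem_filter.mp hC).2
      rw [hprior C, if_pos hCk]
      ring
    · have hset : (agree Ct (k:ℕ)).filter (fun C => ¬ C k = true)
          = (agree Ct (k:ℕ)).filter (fun C => C k = false) := by
        apply Finset.filter_congr
        intro C _
        simp
      rw [hset]
      refine Finset.sum_congr rfl fun C hC => ?_
      have hCk := (Finset.mem_filter.mp hC).2
      rw [hprior C, if_neg (by simp [hCk])]
      ring
  have hZeq : Z ξ q E sgn Ct (k:ℕ) = (q + α * (1 - q)) * ZS ξ q E sgn Ct k true := by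
    rw [hZsplit, hratio]
    ring
  have hZStne : ZS ξ q E sgn Ct k true ≠ 0 := by
    intro h
    rw [hZeq, h, mul_zero] at hZ
    exact lt_irrefl 0 hZ
  have hDne : q + α * (1 - q) ≠ 0 := ne_of_gt hD
  refine ⟨?_, ?_, hratio⟩
  · rw [hZeq]
    field_simp
  · rw [hratio, hZeq]
    field_simp
end

section
/- Weight-flip ratio formula for the Metropolis chain: let C be an assignment with C(v_z) = A and C' identical to C except C'(v_z) = R. Assume all entries of ξ lie in (0,1) and q ∈ (0,1). Then w(C')/w(C) = ((1−q)/q) · ∏_{X∈{A,R}} (ξ_{R,X}/ξ_{A,X})^{o⁺_X(v_z)} · ((1−ξ_{R,X})/(1−ξ_{A,X}))^{o⁻_X(v_z)} · (ξ_{X,R}/ξ_{X,A})^{i⁺_X(v_z)} · ((1−ξ_{X,R})/(1−ξ_{X,A}))^{i⁻_X(v_z)} · (ξ_{R,R}/ξ_{A,A})^{self₊(v_z)} · ((1−ξ_{R,R})/(1−ξ_{A,A}))^{self₋(v_z)}, where o^s_X(v_z) is the number of non-self-loop outgoing edges of sign s from v_z to vertices labelled X by C, i^s_X(v_z) is the number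 of non-self-loop incoming edges of sign s to v_z from vertices labelled X, and self_s(v_z) is the number of self-loops at v_z of sign s. -/
open Finset

/-- The weight `w(C) = P(𝒜|Θ,C) ⬝ P(C|j)` of a state of the chain. -/
def w {n : ℕ} (ξ : Bool → Bool → ℝ) (q : ℝ) (E : Finset (Fin n × Fin n))
    (sgn : Fin n × Fin n → Bool) (j : ℕ) (C : Fin n → Bool) : ℝ :=
  likCond ξ E sgn C * priorFrom q j C

/-- `o^s_X(v_z)`: the number of non-self-loop outgoing edges of sign `s` from
`v_z` to vertices labelled `X` by `C`. -/
def oCnt {n : ℕ} (E : Finset (Fin n × Fin n)) (sgn : Fin n × Fin n → Bool)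
    (C : Fin n → Bool) (z : Fin n) (s X : Bool) : ℕ :=
  (E.filter (fun e => e.1 = z ∧ e.2 ≠ z ∧ sgn e = s ∧ C e.2 = X)).card

/-- `i^s_X(v_z)`: the number of non-self-loop incoming edges of sign `s` to
`v_z` from vertices labelled `X` by `C`. -/
def iCnt {n : ℕ} (E : Finset (Fin n × Fin n)) (sgn : Fin n × Fin n → Bool)
    (C : Fin n → Bool) (z : Fin n) (s X : Bool) : ℕ :=
  (E.filter (fun e => e.2 = z ∧ e.1 ≠ z ∧ sgn e = s ∧ C e.1 = X)).card

/-- `self_s(v_z)`: the number of self-loops at `v_z` of sign `s`. -/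
def selfCnt {n : ℕ} (E : Finset (Fin n × Fin n)) (sgn : Fin n × Fin n → Bool)
    (z : Fin n) (s : Bool) : ℕ :=
  (E.filter (fun e => e = (z, z) ∧ sgn e = s)).card

/-- Weight-flip ratio formula for the Metropolis chain: flipping the label of a
free vertex `v_z` from `A` (`true`) to `R` (`false`) changes the weight by the
stated closed-form ratio. -/
theorem stmt_17 (n : ℕ) (E : Finset (Fin n × Fin n)) (sgn : Fin n × Fin n → Bool)
    (ξ : Bool → Bool → ℝ) (q : ℝ)
    (hξ : ∀ x y, ξ x y ∈ Set.Ioo (0 : ℝ) 1) (hq : q ∈ Set.Ioo (0 : ℝ) 1)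
    (j : ℕ) (z : Fin n) (hz : j ≤ (z : ℕ))
    (C : Fin n → Bool) (hCz : C z = true) :
    w ξ q E sgn j (Function.update C z false) / w ξ q E sgn j C =
      (1 - q) / q *
      (∏ X : Bool,
        (ξ false X / ξ true X) ^ oCnt E sgn C z true X *
          ((1 - ξ false X) / (1 - ξ true X)) ^ oCnt E sgn C z false X *
          (ξ X false / ξ X true) ^ iCnt E sgn C z true X *
          ((1 - ξ X false) / (1 - ξ X true)) ^ iCnt E sgn C z false X) *
      (ξ false false / ξ true true) ^ selfCnt E sgn z true *
      ((1 - ξ false false) / (1 - ξ true true)) ^ selfCnt E sgn z false := by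
  obtain ⟨hq0, hq1⟩ := hq
  have hq0' : q ≠ 0 := ne_of_gt hq0
  have hq1' : (1 : ℝ) - q ≠ 0 := by linarith
  set C' := Function.update C z false with hC'
  have hpos : ∀ s x y, 0 < pSign ξ s x y := by
    intro s x y
    cases s with
    | false => have := (hξ x y).2; simp only [pSign, Bool.false_eq_true, if_false]; linarith
    | true => simpa [pSign] using (hξ x y).1
  have hne : ∀ s x y, pSign ξ s x y ≠ 0 := fun s x y => (hpos s x y).ne'
  -- prior ratio
  have hzT : z ∈ univ.filter (fun i : Fin n => j ≤ (i : ℕ) ∧ C i = true) := by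
    simp [hz, hCz]
  have hzF : z ∉ univ.filter (fun i : Fin n => j ≤ (i : ℕ) ∧ C i = false) := by
    simp [hCz]
  have hTeq : univ.filter (fun i : Fin n => j ≤ (i : ℕ) ∧ C' i = true)
      = (univ.filter (fun i : Fin n => j ≤ (i : ℕ) ∧ C i = true)).erase z := by
    ext i
    by_cases h : i = z
    · simp [h, hC', Function.update_self]
    · simp [h, hC', Function.update_of_ne h, and_comm]
  have hFeq : univ.filter (fun i : Fin n => j ≤ (i : ℕ) ∧ C' i = false)
      = insert z (univ.filter (fun i : Fin n => j ≤ (i : ℕ) ∧ C i = false)) := by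
    ext i
    by_cases h : i = z
    · simp [h, hC', Function.update_self, hz]
    · simp [h, hC', Function.update_of_ne h]
  obtain ⟨k, hk⟩ : ∃ k, (univ.filter (fun i : Fin n => j ≤ (i : ℕ) ∧ C i = true)).card = k + 1 :=
    ⟨_, (Nat.succ_pred_eq_of_pos (Finset.card_pos.mpr ⟨z, hzT⟩)).symm⟩
  have hprior : priorFrom q j C' / priorFrom q j C = (1 - q) / q := by
    unfold priorFrom
    rw [hTeq, hFeq, Finset.card_erase_of_mem hzT, Finset.card_insert_of_notMem hzF, hk]
    simp only [Nat.add_sub_cancel, pow_succ]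
    have hqk : q ^ k ≠ 0 := pow_ne_zero _ hq0'
    have hqb : (1 - q) ^ (univ.filter (fun i : Fin n => j ≤ (i : ℕ) ∧ C i = false)).card ≠ 0 :=
      pow_ne_zero _ hq1'
    field_simp
  -- likelihood ratio
  have hlik : likCond ξ E sgn C' / likCond ξ E sgn C
      = ∏ e ∈ E, pSign ξ (sgn e) (C' e.1) (C' e.2) / pSign ξ (sgn e) (C e.1) (C e.2) := by
    unfold likCond
    rw [← Finset.prod_div_distrib]
  have hr : ∀ e ∈ E,
      pSign ξ (sgn e) (C' e.1) (C' e.2) / pSign ξ (sgn e) (C e.1) (C e.2) =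
      (if e.1 = z ∧ e.2 ≠ z ∧ sgn e = true ∧ C e.2 = true then ξ false true / ξ true true else 1) *
      (if e.1 = z ∧ e.2 ≠ z ∧ sgn e = false ∧ C e.2 = true then (1 - ξ false true) / (1 - ξ true true) else 1) *
      (if e.2 = z ∧ e.1 ≠ z ∧ sgn e = true ∧ C e.1 = true then ξ true false / ξ true true else 1) *
      (if e.2 = z ∧ e.1 ≠ z ∧ sgn e = false ∧ C e.1 = true then (1 - ξ true false) / (1 - ξ true true) else 1) *
      (if e.1 = z ∧ e.2 ≠ z ∧ sgn e = true ∧ C e.2 = false then ξ false false / ξ true false else 1) *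
      (if e.1 = z ∧ e.2 ≠ z ∧ sgn e = false ∧ C e.2 = false then (1 - ξ false false) / (1 - ξ true false) else 1) *
      (if e.2 = z ∧ e.1 ≠ z ∧ sgn e = true ∧ C e.1 = false then ξ false false / ξ false true else 1) *
      (if e.2 = z ∧ e.1 ≠ z ∧ sgn e = false ∧ C e.1 = false then (1 - ξ false false) / (1 - ξ false true) else 1) *
      (if e = (z, z) ∧ sgn e = true then ξ false false / ξ true true else 1) *
      (if e = (z, z) ∧ sgn e = false then (1 - ξ false false) / (1 - ξ true true) else 1) := by
    intro e _
    by_cases h1 : e.1 = z <;> by_cases h2 : e.2 = z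
    · have he : e = (z, z) := Prod.ext h1 h2
      cases hs : sgn e <;>
        simp [pSign, h1, h2, he, hs, hCz, hC', Function.update_self, Prod.ext_iff]
    · have hC1 : C e.1 = true := h1 ▸ hCz
      cases hs : sgn e <;> cases hc : C e.2 <;>
        simp [pSign, h1, h2, hs, hc, hC1, hCz, hC', Function.update_self,
          Function.update_of_ne h2, Prod.ext_iff]
    · have hC2 : C e.2 = true := h2 ▸ hCz
      cases hs : sgn e <;> cases hc : C e.1 <;>
        simp [pSign, h1, h2, hs, hc, hC2, hCz, hC', Function.update_self,
          Function.update_of_ne h1, Prod.ext_iff]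
    · have hee : e ≠ (z, z) := by
        intro h; exact h1 (by rw [h])
      simp [h1, h2, hee, hC', Function.update_of_ne h1, Function.update_of_ne h2,
        div_self (hne (sgn e) (C e.1) (C e.2))]
  have hprod : (∏ e ∈ E, pSign ξ (sgn e) (C' e.1) (C' e.2) / pSign ξ (sgn e) (C e.1) (C e.2)) =
      (ξ false true / ξ true true) ^ oCnt E sgn C z true true *
      ((1 - ξ false true) / (1 - ξ true true)) ^ oCnt E sgn C z false true *
      (ξ true false / ξ true true) ^ iCnt E sgn C z true true *
      ((1 - ξ true false) / (1 - ξ true true)) ^ iCnt E sgn C z false true *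
      (ξ false false / ξ true false) ^ oCnt E sgn C z true false *
      ((1 - ξ false false) / (1 - ξ true false)) ^ oCnt E sgn C z false false *
      (ξ false false / ξ false true) ^ iCnt E sgn C z true false *
      ((1 - ξ false false) / (1 - ξ false true)) ^ iCnt E sgn C z false false *
      (ξ false false / ξ true true) ^ selfCnt E sgn z true *
      ((1 - ξ false false) / (1 - ξ true true)) ^ selfCnt E sgn z false := by
    rw [Finset.prod_congr rfl hr]
    simp only [Finset.prod_mul_distrib, Finset.prod_ite, Finset.prod_const,
      Finset.prod_const_one, mul_one, one_pow]
    rfl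
  unfold w
  rw [mul_div_mul_comm, hlik, hprod, hprior, Fintype.prod_bool]
  ring
end
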